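/- For the special dual I^{[*]}(H) of the inclusion ideal of a uniformly increasing hypergraph with containment vector a = (a_1,...,a_n), a_1 ≥ ... ≥ a_n, the maximal degree of a minimal monomial generator deg(I^{[*]}(H)) is at most a_1 = max{a_1,...,a_n}, hence deg(I^{[*]}(H)) ≤ a_2 + ... + a_n whenever n ≥ 2 and a_2 ≥ a_1 - (a_3 + ... + a_n); in particular t = Σ_{i≥2} a_i ≥ deg(I^{[*]}(H)) when a_1 ≤ Σ_{i≥2} a_i. -/

import Mathlib

/-! Since the edges form a chain, the exponent of `x_j` (for `j ∈ E_i`) in `m^{a∖b_i}` is the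
number of edges up to `E_i` that contain `j`. If `x^v` is a minimal generator of the special
dual, lowering `v_j` by one leaves some `m^{a∖b_i}`; there `x_j` is the only variable reaching its
exponent, which is exactly `v_j`. The resulting sets of `v_j` edges are pairwise disjoint and
consist of edges meeting the support of `v`, all of which contain the first vertex, so
`deg x^v ≤ a_1`. -/

open MvPolynomial

noncomputable section

/-- The containment vector of a hypergraph with edges `E`: `a j` is the number of
edges containing the vertex `j`. -/
def contVec {n s : ℕ} (E : Fin s → Finset (Fin n)) (j : Fin n) : ℕ :=
  (Finset.univ.filter fun i : Fin s => j ∈ E i).card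

/-- The exponent vector `b_i` of the `i`-th minimal generator
`x^{b_i} = ∏_{x ∈ E_i} x^{s-i+1}` of the inclusion ideal (here `i : Fin s` is
zero-based, so the exponent is `s - i`). -/
def expVec {n s : ℕ} (E : Fin s → Finset (Fin n)) (i : Fin s) : Fin n →₀ ℕ :=
  Finsupp.ofSupportFinite (fun j => if j ∈ E i then s - i.val else 0) (Set.toFinite _)

/-- The inclusion ideal `I(H)` of a uniformly increasing hypergraph. -/
def inclIdeal (K : Type*) [Field K] {n s : ℕ} (E : Fin s → Finset (Fin n)) :
    Ideal (MvPolynomial (Fin n) K) :=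
  Ideal.span (Set.range fun i : Fin s => monomial (expVec E i) (1 : K))

/-- The special dual `I^{[*]}(H) = ⋂_i m^{a∖b_i}`: the Alexander dual of the inclusion
ideal with respect to the containment vector `a`. -/
def specialDual (K : Type*) [Field K] {n s : ℕ} (E : Fin s → Finset (Fin n)) :
    Ideal (MvPolynomial (Fin n) K) :=
  ⨅ i : Fin s, Ideal.span
    ((fun j => (X j : MvPolynomial (Fin n) K) ^ (contVec E j + 1 - expVec E i j)) ''
      (E i : Set (Fin n)))

/-- `v` is the exponent vector of a minimal monomial generator of the monomial ideal
`J`: `x^v ∈ J`, but no proper monomial divisor of `x^v` lies in `J`. -/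
def IsMinGen {K : Type*} [Field K] {n : ℕ} (J : Ideal (MvPolynomial (Fin n) K))
    (v : Fin n →₀ ℕ) : Prop :=
  monomial v (1 : K) ∈ J ∧ ∀ w : Fin n →₀ ℕ, w ≤ v → w ≠ v → monomial w (1 : K) ∉ J

open Finset

theorem monomial_mem_span_X_pow_image_iff {σ R : Type*} [CommSemiring R] [Nontrivial R]
    (T : Set σ) (c : σ → ℕ) (v : σ →₀ ℕ) :
    monomial v (1 : R) ∈ Ideal.span ((fun j => (X j : MvPolynomial σ R) ^ c j) '' T) ↔
      ∃ j ∈ T, c j ≤ v j := by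
  classical
  have hgen : (fun j => (X j : MvPolynomial σ R) ^ c j) '' T =
      (fun m => monomial m (1 : R)) '' ((fun j => Finsupp.single j (c j)) '' T) := by
    rw [Set.image_image]
    exact Set.image_congr fun j _ => X_pow_eq_monomial
  simp only [hgen, mem_ideal_span_monomial_image, support_monomial, one_ne_zero, if_false,
    mem_singleton, forall_eq, Set.exists_mem_image, Finsupp.single_le_iff]

theorem monomial_mem_iInf_span_X_pow_image_iff {ι σ R : Type*} [CommSemiring R] [Nontrivial R]
    (T : ι → Set σ) (c : ι → σ → ℕ) (v : σ →₀ ℕ) :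
    monomial v (1 : R) ∈ ⨅ i, Ideal.span ((fun j => (X j : MvPolynomial σ R) ^ c i j) '' T i) ↔
      ∀ i, ∃ j ∈ T i, c i j ≤ v j := by
  simp only [Submodule.mem_iInf, monomial_mem_span_X_pow_image_iff]

theorem IsMinGen.exists_tight {K ι : Type*} [Field K] {n : ℕ} {T : ι → Finset (Fin n)}
    {c : ι → Fin n → ℕ} {v : Fin n →₀ ℕ}
    (hv : IsMinGen (⨅ i, Ideal.span ((fun j => (X j : MvPolynomial (Fin n) K) ^ c i j) ''
      (T i : Set (Fin n)))) v) {j : Fin n} (hj : j ∈ v.support) :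
    ∃ i, j ∈ T i ∧ v j = c i j ∧ ∀ j' ∈ T i, j' ≠ j → v j' < c i j' := by
  obtain ⟨hmem, hmin⟩ := hv
  simp only [monomial_mem_iInf_span_X_pow_image_iff, Finset.mem_coe] at hmem hmin
  have hvj : v j ≠ 0 := Finsupp.mem_support_iff.mp hj
  set w := v - Finsupp.single j 1
  have hw : ∀ j', w j' = if j' = j then v j - 1 else v j' := by
    intro j'
    rcases eq_or_ne j' j with rfl | h
    · simp [w]
    · simp [w, h]
  have hwv : w ≠ v := fun h => by have := hw j; simp only [h, if_true] at this; omega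
  obtain ⟨i, hi⟩ : ∃ i, ∀ j' ∈ T i, w j' < c i j' := by
    simpa using hmin w tsub_le_self hwv
  obtain ⟨k, hkT, hk⟩ := hmem i
  obtain rfl : k = j := by
    by_contra hne
    have hwk := hi k hkT
    rw [hw, if_neg hne] at hwk
    omega
  have hwk := hi k hkT
  rw [hw, if_pos rfl] at hwk
  exact ⟨i, hkT, by omega, fun j' hj' hne => by simpa [hw, hne] using hi j' hj'⟩

section ChainHypergraph

variable {n s : ℕ} (E : Fin s → Finset (Fin n))

def incidentEdgesUpTo (j : Fin n) (i : Fin s) : Finset (Fin s) :=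
  {t ∈ Iic i | j ∈ E t}

variable {E}

theorem contVec_le_contVec {j k : Fin n} (h : ∀ i, j ∈ E i → k ∈ E i) :
    contVec E j ≤ contVec E k :=
  card_le_card (monotone_filter_right _ fun i _ => h i)

theorem contVec_add_one_sub_expVec (hmono : Monotone E) {i : Fin s} {j : Fin n} (hj : j ∈ E i) :
    contVec E j + 1 - expVec E i j = #(incidentEdgesUpTo E j i) := by
  have hsplit : ({t | j ∈ E t} : Finset (Fin s)) = incidentEdgesUpTo E j i ∪ Ioi i := by
    ext t
    simp only [incidentEdgesUpTo, mem_union, mem_filter, mem_univ, true_and, mem_Iic, mem_Ioi]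
    exact ⟨fun ht => (le_or_gt t i).imp (⟨·, ht⟩) id,
      fun h => h.elim And.right fun hit => hmono hit.le hj⟩
  have hdisj : Disjoint (incidentEdgesUpTo E j i) (Ioi i) :=
    disjoint_left.mpr fun t ht hti => (mem_Ioi.mp hti).not_ge (mem_Iic.mp (mem_filter.mp ht).1)
  have hexp : expVec E i j = s - i := by
    simp [expVec, Finsupp.ofSupportFinite_coe, hj]
  rw [contVec, hsplit, card_union_of_disjoint hdisj, Fin.card_Ioi, hexp]
  omega

/-- A common edge would put `y` into `E i`, where its exponent is at most `v y`. -/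
theorem disjoint_incidentEdgesUpTo (hmono : Monotone E) {v : Fin n →₀ ℕ} {i i' : Fin s}
    {x y : Fin n} (hxy : x ≠ y)
    (hx : ∀ j' ∈ E i, j' ≠ x → v j' < #(incidentEdgesUpTo E j' i))
    (hy : v y = #(incidentEdgesUpTo E y i')) (hii' : i ≤ i') :
    Disjoint (incidentEdgesUpTo E x i) (incidentEdgesUpTo E y i') := by
  refine disjoint_left.mpr fun t htx hty => ?_
  simp only [incidentEdgesUpTo, mem_filter, mem_Iic] at htx hty
  have hlt := hx y (hmono htx.1 hty.2) hxy.symm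
  have hle : #(incidentEdgesUpTo E y i) ≤ #(incidentEdgesUpTo E y i') :=
    card_le_card (filter_subset_filter _ (Iic_subset_Iic.mpr hii'))
  omega

end ChainHypergraph

theorem sum_le_card_of_isMinGen_specialDual {K : Type*} [Field K] {n s : ℕ}
    {E : Fin s → Finset (Fin n)} (hmono : Monotone E) {v : Fin n →₀ ℕ}
    (hv : IsMinGen (specialDual K E) v) :
    (v.sum fun _ m => m) ≤ #{i | ∃ j ∈ v.support, j ∈ E i} := by
  have htight : ∀ j : v.support, ∃ i, v j = #(incidentEdgesUpTo E j i) ∧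
      ∀ j' ∈ E i, j' ≠ j → v j' < #(incidentEdgesUpTo E j' i) := by
    rintro ⟨j, hj⟩
    obtain ⟨i, hji, hvj, hlt⟩ := IsMinGen.exists_tight hv hj
    refine ⟨i, contVec_add_one_sub_expVec hmono hji ▸ hvj, fun j' hj' hne => ?_⟩
    exact contVec_add_one_sub_expVec hmono hj' ▸ hlt j' hj' hne
  choose I hIeq hIlt using htight
  have hdisj : ((univ : Finset v.support) : Set v.support).PairwiseDisjoint
      fun j => incidentEdgesUpTo E j (I j) := by
    intro x _ y _ hxy
    rcases le_total (I x) (I y) with h | h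
    · exact disjoint_incidentEdgesUpTo hmono (Subtype.coe_ne_coe.mpr hxy) (hIlt x) (hIeq y) h
    · exact (disjoint_incidentEdgesUpTo hmono (Subtype.coe_ne_coe.mpr hxy.symm) (hIlt y)
        (hIeq x) h).symm
  calc (v.sum fun _ m => m) = ∑ j : v.support, v j := (sum_coe_sort _ _).symm
    _ = #(univ.biUnion fun j : v.support => incidentEdgesUpTo E j (I j)) := by
      rw [card_biUnion hdisj]
      exact sum_congr rfl fun j _ => hIeq j
    _ ≤ #{i | ∃ j ∈ v.support, j ∈ E i} := by
      refine card_le_card fun t ht => ?_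
      simp only [incidentEdgesUpTo, mem_biUnion, mem_univ, true_and, mem_filter] at ht ⊢
      obtain ⟨⟨j, hj⟩, -, hjt⟩ := ht
      exact ⟨j, hj, hjt⟩

/-- For the special dual `I^{[*]}(H)` with containment vector
`a_1 ≥ ⋯ ≥ a_n` (vertices ordered so that edges are initial segments, `E_s = X`):
`a_1 = max{a_1,…,a_n}`, every minimal monomial generator of `I^{[*]}(H)` has degree
at most `a_1`, and consequently `deg(I^{[*]}(H)) ≤ t = a_2 + ⋯ + a_n` whenever
`a_1 ≤ a_2 + ⋯ + a_n`. -/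
theorem stmt19 {K : Type*} [Field K]
    {n s : ℕ} (E : Fin s → Finset (Fin n))
    (hmono : Monotone E)
    (hn : 2 ≤ n)
    (hinit : ∀ i : Fin s, ∀ j k : Fin n, j ≤ k → k ∈ E i → j ∈ E i) :
    (contVec E ⟨0, by omega⟩ = Finset.univ.sup fun j : Fin n => contVec E j) ∧
      (∀ v : Fin n →₀ ℕ, IsMinGen (specialDual K E) v →
        (v.sum fun _ m => m) ≤ contVec E ⟨0, by omega⟩) ∧
      (contVec E ⟨0, by omega⟩
          ≤ ∑ j ∈ Finset.univ.erase (⟨0, by omega⟩ : Fin n), contVec E j →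
        ∀ v : Fin n →₀ ℕ, IsMinGen (specialDual K E) v →
          (v.sum fun _ m => m)
            ≤ ∑ j ∈ Finset.univ.erase (⟨0, by omega⟩ : Fin n), contVec E j) := by
  have hzero : ∀ i, ∀ j ∈ E i, (⟨0, by omega⟩ : Fin n) ∈ E i :=
    fun i j => hinit i _ j (Nat.zero_le j)
  have hdeg (v : Fin n →₀ ℕ) (hv : IsMinGen (specialDual K E) v) :
      (v.sum fun _ m => m) ≤ contVec E ⟨0, by omega⟩ :=
    (sum_le_card_of_isMinGen_specialDual hmono hv).trans <|
      card_le_card <| monotone_filter_right _ fun i _ ⟨j, _, hj⟩ => hzero i j hj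
  refine ⟨le_antisymm (le_sup (mem_univ _)) ?_, hdeg, fun ht v hv => (hdeg v hv).trans ht⟩
  exact Finset.sup_le fun j _ => contVec_le_contVec fun i => hzero i j
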